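/- arXiv:2004.12851 — 2 statements merged into one kernel-verified Lean document; each statement's English description precedes it below -/
import Mathlib

section
/- With G = GL₂(F)³ acting on X = M₂(F) ⊕ M₂(F) as above, define P(x) = disc(F_x) where F_x(v₁, v₂) = det(x₁ v₁ + x₂ v₂), and ω(g₁, g₂, g₃) = det(g₁)⁻² det(g₂)² det(g₃)². Then P(x·ρ(g)) = ω(g)·P(x) for all x ∈ X and g ∈ G. -/
/-- The coefficient-wise discriminant of the binary quadratic form
`F_x(v₁,v₂) = det(x₁ v₁ + x₂ v₂)`, i.e.
`P(x₁,x₂) = (det(x₁+x₂) - det x₁ - det x₂)² - 4 det x₁ det x₂`. -/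
def cubeP {F : Type*} [CommRing F] (x₁ x₂ : Matrix (Fin 2) (Fin 2) F) : F :=
  ((x₁ + x₂).det - x₁.det - x₂.det) ^ 2 - 4 * x₁.det * x₂.det

lemma cubeP_smul_comb {F : Type*} [CommRing F] (a b c d : F)
    (y₁ y₂ : Matrix (Fin 2) (Fin 2) F) :
    cubeP (a • y₁ + c • y₂) (b • y₁ + d • y₂) = (a * d - b * c) ^ 2 * cubeP y₁ y₂ := by
  simp only [cubeP, Matrix.det_fin_two, Matrix.add_apply, Matrix.smul_apply, smul_eq_mul]
  ring

lemma cubeP_mul_left {F : Type*} [CommRing F] (m x₁ x₂ : Matrix (Fin 2) (Fin 2) F) :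
    cubeP (m * x₁) (m * x₂) = m.det ^ 2 * cubeP x₁ x₂ := by
  simp only [cubeP, ← Matrix.mul_add, Matrix.det_mul]
  ring

lemma cubeP_mul_right {F : Type*} [CommRing F] (m x₁ x₂ : Matrix (Fin 2) (Fin 2) F) :
    cubeP (x₁ * m) (x₂ * m) = m.det ^ 2 * cubeP x₁ x₂ := by
  simp only [cubeP, ← Matrix.add_mul, Matrix.det_mul]
  ring

/-- `P` is a relative invariant of the `GL₂(F)³`-action on `M₂(F)²` with
eigencharacter `ω(g₁,g₂,g₃) = det(g₁)⁻² det(g₂)² det(g₃)²`. -/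
theorem cubeP_relative_invariant
    {F : Type*} [Field F] [CharZero F]
    (g₁ g₂ : Matrix (Fin 2) (Fin 2) F) (a b c d : F)
    (h₁ : IsUnit g₁.det) (h₂ : IsUnit g₂.det)
    (x₁ x₂ : Matrix (Fin 2) (Fin 2) F) :
    cubeP (a • (g₁⁻¹ * x₁ * g₂) + c • (g₁⁻¹ * x₂ * g₂))
          (b • (g₁⁻¹ * x₁ * g₂) + d • (g₁⁻¹ * x₂ * g₂)) =
      (g₁.det)⁻¹ ^ 2 * g₂.det ^ 2 * (a * d - b * c) ^ 2 * cubeP x₁ x₂ := by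
  rw [cubeP_smul_comb, cubeP_mul_right, cubeP_mul_left, Matrix.det_nonsing_inv,
    Ring.inverse_eq_inv]
  ring
end

section
/- With G = GL₂(F)³ acting on X = M₂(F)² as above, the stabilizer of the point y = (0, E₁₂) (where E₁₂ is the elementary matrix with 1 in position (1,2)) consists exactly of the triples (g₁, g₂, g₃) where g₁ = (a *; 0 *), g₂ = (* *; 0 b), g₃ = (* *; 0 c) are all upper triangular and a = b·c. In particular this stabilizer is contained in the Borel subgroup of upper triangular triples. -/
/-- The stabilizer of the point `y = (0, E₁₂)` under the `GL₂(F)³`-action on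
`M₂(F)²` consists exactly of the triples with `g₁, g₂, g₃` all upper
triangular and `g₁ 0 0 = g₂ 1 1 · d` (i.e. `a = b·c` in the notation of the
table); in particular it lies in the Borel of upper triangular triples. -/
theorem stabilizer_zero_E12
    {F : Type*} [Field F] [CharZero F]
    (g₁ g₂ : Matrix (Fin 2) (Fin 2) F) (a b c d : F)
    (h₁ : IsUnit g₁.det) (h₂ : IsUnit g₂.det)
    (h₃ : a * d - b * c ≠ 0) :
    (a • (g₁⁻¹ * 0 * g₂) + c • (g₁⁻¹ * !![(0:F), 1; 0, 0] * g₂) =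
        (0 : Matrix (Fin 2) (Fin 2) F) ∧
     b • (g₁⁻¹ * 0 * g₂) + d • (g₁⁻¹ * !![(0:F), 1; 0, 0] * g₂) =
        !![(0:F), 1; 0, 0])
    ↔ (g₁ 1 0 = 0 ∧ g₂ 1 0 = 0 ∧ c = 0 ∧ g₁ 0 0 = g₂ 1 1 * d) := by
  have hg1 : g₁ * g₁⁻¹ = 1 := Matrix.mul_nonsing_inv _ h₁
  have hg1' : g₁⁻¹ * g₁ = 1 := Matrix.nonsing_inv_mul _ h₁
  have hg2 : g₂ * g₂⁻¹ = 1 := Matrix.mul_nonsing_inv _ h₂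
  set E : Matrix (Fin 2) (Fin 2) F := !![(0:F), 1; 0, 0] with hE
  constructor
  · rintro ⟨hc, hd⟩
    rw [Matrix.mul_zero, Matrix.zero_mul, smul_zero, zero_add] at hc hd
    have hc2 : c • E = 0 := by
      have h := congrArg (fun M => g₁ * M * g₂⁻¹) hc
      simp only [Matrix.mul_smul, Matrix.smul_mul, ← Matrix.mul_assoc,
        Matrix.mul_zero, Matrix.zero_mul] at h
      rw [hg1, Matrix.one_mul, Matrix.mul_assoc, hg2, Matrix.mul_one] at h
      exact h
    have hc0 : c = 0 := by
      have := congrFun (congrFun hc2 0) 1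
      simpa [hE] using this
    have hd0 : d ≠ 0 := by
      intro h; apply h₃; rw [hc0, h]; ring
    have hd2 : d • (E * g₂) = g₁ * E := by
      have h := congrArg (fun M => g₁ * M) hd
      simp only [Matrix.mul_smul, ← Matrix.mul_assoc] at h
      rw [hg1, Matrix.one_mul] at h
      exact h
    have e10 : d * g₂ 1 0 = 0 := by
      have := congrFun (congrFun hd2 0) 0
      simpa [hE, Matrix.mul_apply, Matrix.vecMul, dotProduct,
        Fin.sum_univ_two] using this
    have e11 : d * g₂ 1 1 = g₁ 0 0 := by
      have := congrFun (congrFun hd2 0) 1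
      simpa [hE, Matrix.mul_apply, Matrix.vecMul, dotProduct,
        Fin.sum_univ_two] using this
    have e21 : (0:F) = g₁ 1 0 := by
      have := congrFun (congrFun hd2 1) 1
      simpa [hE, Matrix.mul_apply, Matrix.vecMul, dotProduct,
        Fin.sum_univ_two] using this
    refine ⟨e21.symm, ?_, hc0, ?_⟩
    · exact (mul_eq_zero.mp e10).resolve_left hd0
    · rw [← e11]; ring
  · rintro ⟨hA, hB, hc0, hD⟩
    have key : d • (g₁⁻¹ * E * g₂) = E := by
      have h : d • (E * g₂) = g₁ * E := by
        ext i j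
        fin_cases i <;> fin_cases j <;>
          (simp [hE, Matrix.mul_apply, Matrix.vecMul, dotProduct,
            Fin.sum_univ_two, hA, hB, hD]; try ring)
      calc d • (g₁⁻¹ * E * g₂) = g₁⁻¹ * (d • (E * g₂)) := by
            rw [Matrix.mul_assoc, Matrix.mul_smul]
        _ = g₁⁻¹ * (g₁ * E) := by rw [h]
        _ = E := by rw [← Matrix.mul_assoc, hg1', Matrix.one_mul]
    constructor <;>
      simp [Matrix.mul_zero, Matrix.zero_mul, hc0, key]
end
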